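/- arXiv:2209.01761 — 5 statements merged into one kernel-verified Lean document; each statement's English description precedes it below -/
import Mathlib

section
/- (Lower bound on information production, Theorem 1, Eq. (8)) For any input state ρ_in = Σ_{i=1}^r p_i |p_i⟩⟨p_i| and any quantum channel Φ, the total information production satisfies ΔS ≥ L_otm, i.e. S(Φ(ρ_in)) − S(ρ_in) ≥ −ln( Σ_{i=1}^r e^{−C(Φ(|p_i⟩⟨p_i|), ρ_out)} ), where ρ_out = Φ(ρ_in). -/
/-!
Since `ρout = ∑ pᵢ Φ(|pᵢ⟩⟨pᵢ|)` and the cross entropy is linear in its first argument,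
`S(ρout) = ∑ pᵢ Cᵢ` with `Cᵢ = C(Φ(|pᵢ⟩⟨pᵢ|), ρout)`. Each `|pᵢ⟩` is an eigenvector of `ρin` with
eigenvalue `pᵢ`, hence of `ln ρin` with eigenvalue `ln pᵢ`, so `S(ρin) = -∑ pᵢ ln pᵢ`. The bound
`∑ pᵢ Cᵢ + ∑ pᵢ ln pᵢ ≥ -ln ∑ e^{-Cᵢ}` is Gibbs' variational inequality, i.e. Jensen's inequality
for the logarithm at the points `e^{-Cᵢ} / pᵢ`.
-/

open scoped Kronecker BigOperators ComplexOrder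

namespace QCE

variable {ι : Type*} [Fintype ι] [DecidableEq ι]

/-- Apply a real function to a matrix via the spectral decomposition (functional calculus on
the eigenvalues); returns `0` if the matrix is not Hermitian. -/
noncomputable def matFun (A : Matrix ι ι ℂ) (f : ℝ → ℝ) : Matrix ι ι ℂ :=
  if h : A.IsHermitian then h.cfc f else 0

/-- Matrix logarithm taken on the support (eigenvalue `0` is sent to `0`,
since `Real.log 0 = 0`). -/
noncomputable def matLog (A : Matrix ι ι ℂ) : Matrix ι ι ℂ :=
  matFun A Real.log

/-- Quantum cross entropy `C(ρ₁, ρ₂) = -Tr[ρ₁ ln ρ₂]`, with the logarithm on the support. -/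
noncomputable def crossEnt (ρ₁ ρ₂ : Matrix ι ι ℂ) : ℝ :=
  -((ρ₁ * matLog ρ₂).trace.re)

/-- Von Neumann entropy `S(ρ) = -Tr[ρ ln ρ]`. -/
noncomputable def vnEntropy (ρ : Matrix ι ι ℂ) : ℝ :=
  crossEnt ρ ρ

/-- A density matrix: positive semidefinite with unit trace. -/
def IsDensityMatrix (ρ : Matrix ι ι ℂ) : Prop :=
  ρ.PosSemidef ∧ ρ.trace = 1

/-- The rank-one projector `|v⟩⟨v|`. -/
noncomputable def outer (v : ι → ℂ) : Matrix ι ι ℂ :=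
  Matrix.vecMulVec v (star v)

/-- An orthonormal family of vectors. -/
def OrthonormalFam {r : ℕ} (v : Fin r → ι → ℂ) : Prop :=
  ∀ i j, (∑ a, star (v i a) * v j a) = if i = j then (1 : ℂ) else 0

/-- The Choi matrix of a linear map on matrices. -/
noncomputable def choi {κ : Type*} [Fintype κ] [DecidableEq κ]
    (Φ : Matrix ι ι ℂ →ₗ[ℂ] Matrix κ κ ℂ) : Matrix (ι × κ) (ι × κ) ℂ :=
  ∑ i : ι, ∑ j : ι, (Matrix.single i j (1 : ℂ)) ⊗ₖ (Φ (Matrix.single i j 1))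

/-- A quantum channel: completely positive (positive semidefinite Choi matrix, by Choi's
theorem) and trace preserving. -/
def IsCPTP {κ : Type*} [Fintype κ] [DecidableEq κ]
    (Φ : Matrix ι ι ℂ →ₗ[ℂ] Matrix κ κ ℂ) : Prop :=
  (choi Φ).PosSemidef ∧ ∀ ρ : Matrix ι ι ℂ, (Φ ρ).trace = ρ.trace

/-- Partial trace over the second tensor factor. -/
noncomputable def ptraceB {dA dB : ℕ}
    (ρ : Matrix (Fin dA × Fin dB) (Fin dA × Fin dB) ℂ) : Matrix (Fin dA) (Fin dA) ℂ :=
  Matrix.of fun i j => ∑ k : Fin dB, ρ (i, k) (j, k)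

/-- Partial trace over the first tensor factor. -/
noncomputable def ptraceA {dA dB : ℕ}
    (ρ : Matrix (Fin dA × Fin dB) (Fin dA × Fin dB) ℂ) : Matrix (Fin dB) (Fin dB) ℂ :=
  Matrix.of fun i j => ∑ k : Fin dA, ρ (k, i) (k, j)


/-- Matrix square root via the spectral decomposition. -/
noncomputable def matSqrt (A : Matrix ι ι ℂ) : Matrix ι ι ℂ :=
  matFun A Real.sqrt

/-- Quantum fidelity `F[ρ,σ] = (Tr[√(√ρ σ √ρ)])²`. -/
noncomputable def fidelity (ρ σ : Matrix ι ι ℂ) : ℝ :=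
  ((matSqrt (matSqrt ρ * σ * matSqrt ρ)).trace.re) ^ 2

end QCE

namespace Matrix.IsHermitian

variable {n 𝕜 : Type*} [RCLike 𝕜] [Fintype n] [DecidableEq n] {A : Matrix n n 𝕜}

theorem cfc_mulVec_of_mulVec_eq (hA : A.IsHermitian) (f : ℝ → ℝ) {x : n → 𝕜} {μ : ℝ}
    (hx : A *ᵥ x = (μ : 𝕜) • x) : hA.cfc f *ᵥ x = (f μ : 𝕜) • x := by
  set U : Matrix n n 𝕜 := (hA.eigenvectorUnitary : Matrix n n 𝕜)
  have hUU : U * star U = 1 := Unitary.coe_mul_star_self _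
  set y := star U *ᵥ x
  have hDy : diagonal (RCLike.ofReal ∘ hA.eigenvalues) *ᵥ y = (μ : 𝕜) • y := by
    have hUy : U *ᵥ y = x := by rw [mulVec_mulVec, hUU, one_mulVec]
    rw [← hA.conjStarAlgAut_star_eigenvectorUnitary, Unitary.conjStarAlgAut_star_apply,
      ← mulVec_mulVec, ← mulVec_mulVec, hUy, hx, mulVec_smul]
  -- each coordinate of `y` vanishes unless the corresponding eigenvalue equals `μ`
  have hfy : diagonal (RCLike.ofReal ∘ f ∘ hA.eigenvalues) *ᵥ y = (f μ : 𝕜) • y := by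
    ext k
    have hk := congrFun hDy k
    simp only [mulVec_diagonal, Function.comp_apply, Pi.smul_apply, smul_eq_mul] at hk ⊢
    rcases eq_or_ne (y k) 0 with h0 | h0
    · simp [h0]
    · rw [show hA.eigenvalues k = μ by exact_mod_cast mul_right_cancel₀ h0 hk]
  calc hA.cfc f *ᵥ x = U *ᵥ (diagonal (RCLike.ofReal ∘ f ∘ hA.eigenvalues) *ᵥ y) := by
        rw [IsHermitian.cfc, Unitary.conjStarAlgAut_apply, ← mulVec_mulVec, ← mulVec_mulVec]
    _ = (f μ : 𝕜) • x := by rw [hfy, mulVec_smul, mulVec_mulVec, hUU, one_mulVec]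

end Matrix.IsHermitian

theorem Real.neg_log_sum_exp_neg_le {κ : Type*} [Fintype κ] (p C : κ → ℝ) (hp : ∀ i, 0 < p i)
    (hp1 : ∑ i, p i = 1) :
    -Real.log (∑ i, Real.exp (-C i)) ≤ ∑ i, p i * C i + ∑ i, p i * Real.log (p i) := by
  have hJensen := strictConcaveOn_log_Ioi.concaveOn.le_map_sum (t := Finset.univ)
    (p := fun i => Real.exp (-C i) / p i) (fun i _ => (hp i).le) hp1
    (fun i _ => Set.mem_Ioi.mpr (div_pos (Real.exp_pos _) (hp i)))
  have hlog : ∀ i, Real.log (Real.exp (-C i) / p i) = -C i - Real.log (p i) := fun i => by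
    rw [Real.log_div (Real.exp_pos _).ne' (hp i).ne', Real.log_exp]
  have hcancel : ∀ i, p i * (Real.exp (-C i) / p i) = Real.exp (-C i) := fun i =>
    mul_div_cancel₀ _ (hp i).ne'
  simp only [smul_eq_mul, hlog, hcancel, mul_sub, mul_neg, Finset.sum_sub_distrib,
    Finset.sum_neg_distrib] at hJensen
  linarith

namespace QCE

section

open Matrix

variable {ι : Type*}

theorem OrthonormalFam.star_dotProduct [Fintype ι] {r : ℕ} {v : Fin r → ι → ℂ}
    (hv : OrthonormalFam v) (i j : Fin r) : star (v i) ⬝ᵥ v j = if i = j then 1 else 0 :=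
  hv i j

theorem isHermitian_sum_smul_outer {κ : Type*} [Fintype κ] (p : κ → ℝ) (v : κ → ι → ℂ) :
    (∑ i, (p i : ℂ) • outer (v i)).IsHermitian := by
  simp [IsHermitian, conjTranspose_sum, outer, conjTranspose_vecMulVec]

variable [Fintype ι]

theorem outer_mulVec (v w : ι → ℂ) : outer v *ᵥ w = (star v ⬝ᵥ w) • v := by
  rw [outer, vecMulVec_mulVec, op_smul_eq_smul]

theorem trace_outer_mul (v : ι → ℂ) (M : Matrix ι ι ℂ) :
    (outer v * M).trace = star v ⬝ᵥ (M *ᵥ v) := by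
  rw [outer, vecMulVec_mul, trace_vecMulVec, dotProduct_comm, dotProduct_mulVec]

theorem sum_smul_outer_mulVec {r : ℕ} {v : Fin r → ι → ℂ} (hv : OrthonormalFam v)
    (c : Fin r → ℂ) (j : Fin r) : (∑ i, c i • outer (v i)) *ᵥ v j = c j • v j := by
  simp [sum_mulVec, smul_mulVec, outer_mulVec, hv.star_dotProduct]

variable [DecidableEq ι]

theorem crossEnt_sum_smul_left {κ : Type*} [Fintype κ] (p : κ → ℝ) (ρ : κ → Matrix ι ι ℂ)
    (σ : Matrix ι ι ℂ) : crossEnt (∑ i, (p i : ℂ) • ρ i) σ = ∑ i, p i * crossEnt (ρ i) σ := by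
  simp [crossEnt, Finset.sum_mul, trace_sum, Complex.re_sum]

theorem crossEnt_outer_of_mulVec_eq {σ : Matrix ι ι ℂ} (hσ : σ.IsHermitian) {v : ι → ℂ}
    (hv : star v ⬝ᵥ v = 1) {μ : ℝ} (hμ : σ *ᵥ v = (μ : ℂ) • v) :
    crossEnt (outer v) σ = -Real.log μ := by
  rw [crossEnt, trace_outer_mul, matLog, matFun, dif_pos hσ, hσ.cfc_mulVec_of_mulVec_eq _ hμ,
    dotProduct_smul, hv]
  simp

theorem vnEntropy_sum_smul_outer {r : ℕ} {v : Fin r → ι → ℂ} (hv : OrthonormalFam v)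
    (p : Fin r → ℝ) : vnEntropy (∑ i, (p i : ℂ) • outer (v i)) = -∑ i, p i * Real.log (p i) := by
  rw [vnEntropy, crossEnt_sum_smul_left, ← Finset.sum_neg_distrib]
  refine Finset.sum_congr rfl fun i _ => ?_
  have hvi : star (v i) ⬝ᵥ v i = 1 := by simpa using hv.star_dotProduct i i
  rw [crossEnt_outer_of_mulVec_eq (isHermitian_sum_smul_outer p v) hvi
    (sum_smul_outer_mulVec hv _ i), mul_neg]

end

theorem information_production_lower_bound_general
    {n m r : ℕ}
    (Φ : Matrix (Fin n) (Fin n) ℂ →ₗ[ℂ] Matrix (Fin m) (Fin m) ℂ)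
    (p : Fin r → ℝ) (hp : ∀ i, 0 < p i) (hp1 : ∑ i, p i = 1)
    (v : Fin r → Fin n → ℂ) (hv : OrthonormalFam v)
    (ρin : Matrix (Fin n) (Fin n) ℂ) (hρin : ρin = ∑ i, (p i : ℂ) • outer (v i))
    (ρout : Matrix (Fin m) (Fin m) ℂ) (hρout : ρout = Φ ρin) :
    vnEntropy ρout - vnEntropy ρin
      ≥ -Real.log (∑ i, Real.exp (-(crossEnt (Φ (outer (v i))) ρout))) := by
  have hρout_sum : ρout = ∑ i, (p i : ℂ) • Φ (outer (v i)) := by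
    simp [hρout, hρin, map_sum]
  have hSout : vnEntropy ρout = ∑ i, p i * crossEnt (Φ (outer (v i))) ρout := by
    rw [vnEntropy]
    nth_rewrite 1 [hρout_sum]
    exact crossEnt_sum_smul_left _ _ _
  rw [hSout, hρin, vnEntropy_sum_smul_outer hv, sub_neg_eq_add, ge_iff_le]
  exact Real.neg_log_sum_exp_neg_le p _ hp hp1

/-- **Theorem 1, Eq. (8)** (Lower bound on information production).
`ΔS = S(Φ(ρin)) - S(ρin) ≥ L_otm = -ln(∑ i, e^{-C(Φ(|pᵢ⟩⟨pᵢ|), ρout)})`. -/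
theorem information_production_lower_bound
    {n m r : ℕ}
    (Φ : Matrix (Fin n) (Fin n) ℂ →ₗ[ℂ] Matrix (Fin m) (Fin m) ℂ) (hΦ : IsCPTP Φ)
    (p : Fin r → ℝ) (hp : ∀ i, 0 < p i) (hp1 : ∑ i, p i = 1)
    (v : Fin r → Fin n → ℂ) (hv : OrthonormalFam v)
    (ρin : Matrix (Fin n) (Fin n) ℂ) (hρin : ρin = ∑ i, (p i : ℂ) • outer (v i))
    (ρout : Matrix (Fin m) (Fin m) ℂ) (hρout : ρout = Φ ρin) :
    vnEntropy ρout - vnEntropy ρin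
      ≥ -Real.log (∑ i, Real.exp (-(crossEnt (Φ (outer (v i))) ρout))) :=
  information_production_lower_bound_general Φ p hp hp1 v hv ρin hρin ρout hρout

end QCE
end

section
/- (Cross-entropy overlap bound, Eq. (15)) For density matrices ρ₁, ρ₂ on a finite-dimensional complex Hilbert space with supp(ρ₁) ⊆ supp(ρ₂), the quantum cross entropy is lower bounded by the negative logarithm of the state overlap: C(ρ₁, ρ₂) ≥ −ln Tr[ρ₁ ρ₂]. -/
open scoped Kronecker BigOperators ComplexOrder

/-!
Diagonalize `ρ₂ = ∑ⱼ λⱼ |uⱼ⟩⟨uⱼ|`. The populations `pⱼ = ⟨uⱼ|ρ₁|uⱼ⟩` form a probability vector,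
and `supp ρ₁ ⊆ supp ρ₂` forces `pⱼ = 0` whenever `λⱼ = 0`. Then `C(ρ₁, ρ₂) = -∑ⱼ pⱼ ln λⱼ` and
`Tr[ρ₁ ρ₂] = ∑ⱼ pⱼ λⱼ`, so the bound is Jensen's inequality for the logarithm, concave on the
eigenvalues that carry weight.
-/

open Finset in
theorem Real.sum_mul_log_le_log_sum_mul {ι : Type*} (s : Finset ι) {p x : ι → ℝ}
    (hp : ∀ i ∈ s, 0 ≤ p i) (hp₁ : ∑ i ∈ s, p i = 1) (hx : ∀ i ∈ s, p i ≠ 0 → 0 < x i) :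
    ∑ i ∈ s, p i * Real.log (x i) ≤ Real.log (∑ i ∈ s, p i * x i) := by
  classical
  have restrict (g : ι → ℝ) : ∑ i ∈ s, p i * g i = ∑ i ∈ s with p i ≠ 0, p i * g i :=
    (sum_filter_of_ne fun i _ h => left_ne_zero_of_mul h).symm
  rw [restrict, restrict]
  simpa only [smul_eq_mul] using strictConcaveOn_log_Ioi.concaveOn.le_map_sum
    (fun i hi => hp i (mem_filter.1 hi).1) (by rw [← hp₁, sum_filter_ne_zero])
    (fun i hi => hx i (mem_filter.1 hi).1 (mem_filter.1 hi).2)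

namespace Matrix.IsHermitian

variable {𝕜 n : Type*} [RCLike 𝕜] [Fintype n] [DecidableEq n] {A : Matrix n n 𝕜}

noncomputable def eigenbasisDiag (hA : A.IsHermitian) (B : Matrix n n 𝕜) (j : n) : 𝕜 :=
  star ⇑(hA.eigenvectorBasis j) ⬝ᵥ B *ᵥ ⇑(hA.eigenvectorBasis j)

theorem trace_mul_cfc (hA : A.IsHermitian) (B : Matrix n n 𝕜) (f : ℝ → ℝ) :
    (B * hA.cfc f).trace = ∑ j, hA.eigenbasisDiag B j * f (hA.eigenvalues j) := by
  have diag_conj (j : n) :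
      (star (hA.eigenvectorUnitary : Matrix n n 𝕜) * B * hA.eigenvectorUnitary) j j =
        hA.eigenbasisDiag B j := by
    rw [mul_mul_apply]; rfl
  rw [IsHermitian.cfc, Unitary.conjStarAlgAut_apply, ← mul_assoc, ← mul_assoc, trace_mul_cycle,
    ← mul_assoc]
  simp only [trace, diag, mul_diagonal, Function.comp_apply, diag_conj]

theorem sum_eigenbasisDiag (hA : A.IsHermitian) (B : Matrix n n 𝕜) :
    ∑ j, hA.eigenbasisDiag B j = B.trace := by
  simpa [← cfc_eq hA, cfc_one ℝ A] using (hA.trace_mul_cfc B 1).symm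

theorem trace_mul_eq_sum_eigenbasisDiag (hA : A.IsHermitian) (B : Matrix n n 𝕜) :
    (B * A).trace = ∑ j, hA.eigenbasisDiag B j * hA.eigenvalues j := by
  simpa [← cfc_eq hA, cfc_id ℝ A hA.isSelfAdjoint] using hA.trace_mul_cfc B id

theorem re_eigenbasisDiag_nonneg (hA : A.IsHermitian) {B : Matrix n n 𝕜} (hB : B.PosSemidef)
    (j : n) : 0 ≤ RCLike.re (hA.eigenbasisDiag B j) :=
  hB.re_dotProduct_nonneg _

theorem eigenbasisDiag_eq_zero (hA : A.IsHermitian) {B : Matrix n n 𝕜}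
    (hker : ∀ x, A *ᵥ x = 0 → B *ᵥ x = 0) {j : n} (hj : hA.eigenvalues j = 0) :
    hA.eigenbasisDiag B j = 0 := by
  have : A *ᵥ ⇑(hA.eigenvectorBasis j) = 0 := by
    rw [hA.mulVec_eigenvectorBasis, hj, zero_smul]
  rw [eigenbasisDiag, hker _ this, dotProduct_zero]

end Matrix.IsHermitian

namespace QCE

theorem crossEnt_eq_sum {ι : Type*} [Fintype ι] [DecidableEq ι] (ρ : Matrix ι ι ℂ)
    {σ : Matrix ι ι ℂ} (hσ : σ.IsHermitian) :
    crossEnt ρ σ = -∑ j, (hσ.eigenbasisDiag ρ j).re * Real.log (hσ.eigenvalues j) := by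
  simp [crossEnt, matLog, matFun, hσ, hσ.trace_mul_cfc, Complex.re_sum]

/-- **Eq. (15)** (Cross-entropy overlap bound). For density matrices with
`supp(ρ₁) ⊆ supp(ρ₂)` (equivalently, `ker ρ₂ ⊆ ker ρ₁`),
`C(ρ₁, ρ₂) ≥ -ln Tr[ρ₁ ρ₂]`. -/
theorem cross_entropy_overlap_bound
    {n : ℕ} (ρ₁ ρ₂ : Matrix (Fin n) (Fin n) ℂ)
    (h₁ : IsDensityMatrix ρ₁) (h₂ : IsDensityMatrix ρ₂)
    (hsupp : ∀ x : Fin n → ℂ, ρ₂.mulVec x = 0 → ρ₁.mulVec x = 0) :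
    crossEnt ρ₁ ρ₂ ≥ -Real.log ((ρ₁ * ρ₂).trace.re) := by
  obtain ⟨hρ₁, htr₁⟩ := h₁
  have hρ₂ : ρ₂.IsHermitian := h₂.1.isHermitian
  set p : Fin n → ℝ := fun j => (hρ₂.eigenbasisDiag ρ₁ j).re
  have hp₁ : ∑ j, p j = 1 := by
    simpa [htr₁, Complex.re_sum] using congrArg Complex.re (hρ₂.sum_eigenbasisDiag ρ₁)
  have hoverlap : (ρ₁ * ρ₂).trace.re = ∑ j, p j * hρ₂.eigenvalues j := by
    simp [p, hρ₂.trace_mul_eq_sum_eigenbasisDiag, Complex.re_sum]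
  have hsupp_eig (j : Fin n) (hpj : p j ≠ 0) : 0 < hρ₂.eigenvalues j :=
    (h₂.1.eigenvalues_nonneg j).lt_of_ne' fun h =>
      hpj (by simp [p, hρ₂.eigenbasisDiag_eq_zero hsupp h])
  rw [crossEnt_eq_sum ρ₁ hρ₂, hoverlap, ge_iff_le, neg_le_neg_iff]
  exact Real.sum_mul_log_le_log_sum_mul _ (fun j _ => hρ₂.re_eigenbasisDiag_nonneg hρ₁ j) hp₁
    fun j _ => hsupp_eig j

end QCE
end

section
/- (Eq. (16)) For any input state ρ_in = Σ_{i=1}^r p_i |p_i⟩⟨p_i| and any quantum channel Φ, with Π_in = Σ_{i=1}^r |p_i⟩⟨p_i| the projector onto the support of ρ_in, one has Σ_{i=1}^r e^{−C(Φ(|p_i⟩⟨p_i|), ρ_out)} ≤ Tr[ Φ(Π_in) ρ_out ], where ρ_out = Φ(ρ_in). -/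
open scoped Kronecker BigOperators ComplexOrder

namespace QCE

variable {ι : Type*} [Fintype ι] [DecidableEq ι]

/-!
Write `σᵢ = Φ(|pᵢ⟩⟨pᵢ|)`. Complete positivity makes each `σᵢ` a density matrix, and
`ρout = ∑ pⱼ σⱼ` gives `pᵢ σᵢ ≤ ρout`, so `supp σᵢ ⊆ supp ρout`. In an eigenbasis of `ρout`, with
eigenvalues `λⱼ` and the diagonal entries `qⱼ` of `σᵢ` as probability weights, Jensen's inequality
for `exp` gives `e^{-C(σᵢ, ρout)} = exp (∑ qⱼ log λⱼ) ≤ ∑ qⱼ λⱼ = Tr[σᵢ ρout]`. Summing over `i`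
and using linearity of `Φ` gives the claim.
-/

open Matrix

lemma _root_.Real.exp_sum_mul_log_le_sum_mul {α : Type*} (s : Finset α) {w x : α → ℝ}
    (hw : ∀ i ∈ s, 0 ≤ w i) (hw1 : ∑ i ∈ s, w i = 1) (hx : ∀ i ∈ s, 0 ≤ x i)
    (hwx : ∀ i ∈ s, x i = 0 → w i = 0) :
    Real.exp (∑ i ∈ s, w i * Real.log (x i)) ≤ ∑ i ∈ s, w i * x i := by
  refine (convexOn_exp.map_sum_le hw hw1 fun i _ => Set.mem_univ (Real.log (x i))).trans_eq ?_
  refine Finset.sum_congr rfl fun i hi => ?_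
  rcases (hx i hi).eq_or_lt with hxi | hxi
  · simp [hwx i hi hxi.symm]
  · rw [smul_eq_mul, Real.exp_log hxi]

lemma trace_mul_conjStarAlgAut_diagonal (B : Matrix ι ι ℂ) (U : unitary (Matrix ι ι ℂ))
    (d : ι → ℂ) :
    (B * Unitary.conjStarAlgAut ℂ _ U (diagonal d)).trace
      = ∑ j, ((U : Matrix ι ι ℂ)ᴴ * B * U) j j * d j := by
  rw [Unitary.conjStarAlgAut_apply, star_eq_conjTranspose, ← Matrix.mul_assoc,
    ← Matrix.mul_assoc, trace_mul_cycle, ← Matrix.mul_assoc, trace]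
  simp [mul_diagonal]

theorem exp_neg_crossEnt_le_re_trace_mul {σ ρ : Matrix ι ι ℂ} (hσ : σ.PosSemidef)
    (hσ1 : σ.trace = 1) {c : ℝ} (hc : 0 < c) (hρσ : (ρ - (c : ℂ) • σ).PosSemidef) :
    Real.exp (-crossEnt σ ρ) ≤ (σ * ρ).trace.re := by
  have hρ : ρ.PosSemidef := by
    simpa using hρσ.add (hσ.smul (Complex.zero_le_real.mpr hc.le))
  have hH := hρ.isHermitian
  set U : Matrix ι ι ℂ := (hH.eigenvectorUnitary : Matrix ι ι ℂ) with hU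
  set lam := hH.eigenvalues
  set q : ι → ℝ := fun j => ((Uᴴ * σ * U) j j).re
  have hσU : (Uᴴ * σ * U).PosSemidef := hσ.conjTranspose_mul_mul_same U
  have hq : ∀ j, (Uᴴ * σ * U) j j = q j := fun j =>
    Complex.eq_re_of_ofReal_le (r := 0) (by simpa using hσU.diag_nonneg)
  have hq0 : ∀ j, 0 ≤ q j := fun j => by
    simpa [← Complex.zero_le_real, ← hq] using hσU.diag_nonneg
  have hq1 : ∑ j, q j = 1 := by
    have : (Uᴴ * σ * U).trace = 1 := by
      rw [trace_mul_cycle, ← star_eq_conjTranspose, hU,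
        mem_unitaryGroup_iff.mp hH.eigenvectorUnitary.2, Matrix.one_mul, hσ1]
    simpa [trace, hq, ← Complex.ofReal_sum] using this
  have hsupp : ∀ j, lam j = 0 → q j = 0 := by
    intro j hj
    -- the `j`-th diagonal entry of `Uᴴ (ρ - c σ) U` is `λⱼ - c qⱼ ≥ 0`
    have hdiag : Uᴴ * ρ * U = diagonal (Complex.ofReal ∘ lam) := by
      simpa [star_eq_conjTranspose] using hH.conjStarAlgAut_star_eigenvectorUnitary
    have hentry := (hρσ.conjTranspose_mul_mul_same U).diag_nonneg (i := j)
    rw [Matrix.mul_sub, Matrix.sub_mul, Matrix.mul_smul, Matrix.smul_mul, Matrix.sub_apply, hdiag,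
      Matrix.smul_apply, hq, diagonal_apply_eq, Function.comp_apply, hj] at hentry
    have hcq : c * q j ≤ 0 := by exact_mod_cast (by simpa using hentry : (c : ℂ) * q j ≤ 0)
    exact le_antisymm (nonpos_of_mul_nonpos_right hcq hc) (hq0 j)
  have hlog : -crossEnt σ ρ = ∑ j, q j * Real.log (lam j) := by
    rw [crossEnt, neg_neg, matLog, matFun, dif_pos hH, IsHermitian.cfc,
      trace_mul_conjStarAlgAut_diagonal, ← hU, Complex.re_sum]
    simp [hq, lam]
  have htr : (σ * ρ).trace.re = ∑ j, q j * lam j := by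
    conv_lhs => rw [hH.spectral_theorem]
    rw [trace_mul_conjStarAlgAut_diagonal, ← hU, Complex.re_sum]
    simp [hq, lam]
  rw [hlog, htr]
  exact Real.exp_sum_mul_log_le_sum_mul _ (fun j _ => hq0 j) hq1
    (fun j _ => hρ.eigenvalues_nonneg j) fun j _ => hsupp j

lemma OrthonormalFam.trace_outer {α : Type*} [Fintype α] {r : ℕ} {v : Fin r → α → ℂ}
    (hv : OrthonormalFam v) (i : Fin r) : (outer (v i)).trace = 1 := by
  simpa [outer, trace, vecMulVec_apply, mul_comm] using hv i i

section Channel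

variable {κ : Type*} [Fintype κ] [DecidableEq κ]

lemma choi_apply (Φ : Matrix ι ι ℂ →ₗ[ℂ] Matrix κ κ ℂ) (a b : ι) (k l : κ) :
    choi Φ (a, k) (b, l) = Φ (single a b 1) k l := by
  simp [choi, Matrix.sum_apply, single, ite_and]

lemma apply_apply_eq_sum_choi (Φ : Matrix ι ι ℂ →ₗ[ℂ] Matrix κ κ ℂ) (M : Matrix ι ι ℂ)
    (k l : κ) : Φ M k l = ∑ a, ∑ b, M a b * choi Φ (a, k) (b, l) := by
  have hM : ∀ a b, single a b (M a b) = M a b • single a b (1 : ℂ) := by simp [smul_single]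
  conv_lhs => rw [matrix_eq_sum_single M]
  simp only [map_sum, Matrix.sum_apply, hM, map_smul, Matrix.smul_apply, smul_eq_mul, choi_apply]

/-- `Φ |u⟩⟨u| = Wᴴ (choi Φ) W` is a compression of the Choi matrix. -/
theorem posSemidef_apply_outer {Φ : Matrix ι ι ℂ →ₗ[ℂ] Matrix κ κ ℂ}
    (hΦ : (choi Φ).PosSemidef) (u : ι → ℂ) : (Φ (outer u)).PosSemidef := by
  let W : Matrix (ι × κ) κ ℂ := of fun x l => if x.2 = l then star (u x.1) else 0
  have hW : Φ (outer u) = Wᴴ * choi Φ * W := by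
    ext k l
    simp only [outer, apply_apply_eq_sum_choi, vecMulVec_apply, Pi.star_apply, RCLike.star_def,
      mul_apply, conjTranspose_apply, of_apply, apply_ite, RingHomCompTriple.comp_apply,
      RingHom.id_apply, star_zero, ite_mul, zero_mul, Fintype.sum_prod_type, Finset.sum_ite_eq',
      Finset.mem_univ, ↓reduceIte, Finset.sum_mul, mul_zero, W]
    rw [Finset.sum_comm]
    exact Finset.sum_congr rfl fun _ _ => Finset.sum_congr rfl fun _ _ => by ring
  rw [hW]
  exact hΦ.conjTranspose_mul_mul_same W

end Channel

theorem exp_cross_entropy_sum_le_overlap_general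
    {n m r : ℕ}
    (Φ : Matrix (Fin n) (Fin n) ℂ →ₗ[ℂ] Matrix (Fin m) (Fin m) ℂ) (hΦ : IsCPTP Φ)
    (p : Fin r → ℝ) (hp : ∀ i, 0 < p i)
    (v : Fin r → Fin n → ℂ) (hv : OrthonormalFam v)
    (ρin : Matrix (Fin n) (Fin n) ℂ) (hρin : ρin = ∑ i, (p i : ℂ) • outer (v i))
    (ρout : Matrix (Fin m) (Fin m) ℂ) (hρout : ρout = Φ ρin) :
    ∑ i, Real.exp (-(crossEnt (Φ (outer (v i))) ρout))
      ≤ ((Φ (∑ i, outer (v i)) * ρout).trace).re := by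
  have hσ : ∀ i, (Φ (outer (v i))).PosSemidef := fun i => posSemidef_apply_outer hΦ.1 (v i)
  have hρ_sum : ρout = ∑ i, (p i : ℂ) • Φ (outer (v i)) := by simp [hρout, hρin, map_sum]
  have hρ_dom : ∀ i, (ρout - (p i : ℂ) • Φ (outer (v i))).PosSemidef := by
    intro i
    rw [hρ_sum, ← Finset.add_sum_erase _ _ (Finset.mem_univ i), add_sub_cancel_left]
    exact posSemidef_sum _ fun j _ => (hσ j).smul (Complex.zero_le_real.mpr (hp j).le)
  calc ∑ i, Real.exp (-(crossEnt (Φ (outer (v i))) ρout))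
      ≤ ∑ i, ((Φ (outer (v i)) * ρout).trace).re := Finset.sum_le_sum fun i _ =>
        exp_neg_crossEnt_le_re_trace_mul (hσ i) (by rw [hΦ.2, hv.trace_outer]) (hp i) (hρ_dom i)
    _ = ((Φ (∑ i, outer (v i)) * ρout).trace).re := by
        simp [map_sum, Finset.sum_mul, trace_sum]

/-- **Eq. (16)**. With `Π_in = ∑ i, |pᵢ⟩⟨pᵢ|` the projector onto the support of `ρin`,
`∑ i, e^{-C(Φ(|pᵢ⟩⟨pᵢ|), ρout)} ≤ Tr[Φ(Π_in) ρout]`. -/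
theorem exp_cross_entropy_sum_le_overlap
    {n m r : ℕ}
    (Φ : Matrix (Fin n) (Fin n) ℂ →ₗ[ℂ] Matrix (Fin m) (Fin m) ℂ) (hΦ : IsCPTP Φ)
    (p : Fin r → ℝ) (hp : ∀ i, 0 < p i) (hp1 : ∑ i, p i = 1)
    (v : Fin r → Fin n → ℂ) (hv : OrthonormalFam v)
    (ρin : Matrix (Fin n) (Fin n) ℂ) (hρin : ρin = ∑ i, (p i : ℂ) • outer (v i))
    (ρout : Matrix (Fin m) (Fin m) ℂ) (hρout : ρout = Φ ρin) :
    ∑ i, Real.exp (-(crossEnt (Φ (outer (v i))) ρout))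
      ≤ ((Φ (∑ i, outer (v i)) * ρout).trace).re :=
  exp_cross_entropy_sum_le_overlap_general Φ hΦ p hp v hv ρin hρin ρout hρout

end QCE
end

section
/- (Eq. (23): cross entropy through the quantum autoencoder channel) In the quantum autoencoder setup, for each i, C(Φ(|p_i⟩⟨p_i|), ρ_out) = S(ρ_B) + C(ρ_A^{(i)}, ρ_A), where ρ_out = Φ(ρ_in), ρ_A = Tr_B[U ρ_in U†] and ρ_A^{(i)} = Tr_B[U |p_i⟩⟨p_i| U†]. -/
open scoped Kronecker BigOperators ComplexOrder

namespace QCE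

variable {ι : Type*} [Fintype ι] [DecidableEq ι]

/-!
Conjugation by the unitary `U` commutes with the logarithm, so the left-hand side is the cross
entropy of `ρA⁽ⁱ⁾ ⊗ ρB` relative to `ρA ⊗ ρB`. In a product eigenbasis `log (ρA ⊗ ρB)` is
diagonal with entries `log (a j * b k)`, which equals `log (a j) + log (b k)` unless `a j` or `b k`
vanishes. Those exceptional entries carry no weight: `ρA = ∑ pₖ ρA⁽ᵏ⁾` with all `pₖ > 0` forces
`ker ρA ⊆ ker ρA⁽ⁱ⁾`, i.e. `supp ρA⁽ⁱ⁾ ⊆ supp ρA`. With unit traces the sum then splits into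
`C(ρA⁽ⁱ⁾, ρA) + S(ρB)`.
-/

open Matrix Polynomial

lemma aeval_diagonal_ofReal (e : ι → ℝ) (q : ℝ[X]) :
    aeval (diagonal fun i => (e i : ℂ)) q = diagonal fun i => ((q.eval (e i) : ℝ) : ℂ) := by
  rw [← diagonalAlgHom_apply (R := ℝ), aeval_algHom_apply, diagonalAlgHom_apply]
  congr 1
  ext i
  rw [aeval_pi_apply]
  exact aeval_algebraMap_apply_eq_algebraMap_eval (e i) q

lemma aeval_unitary_conj {W : Matrix ι ι ℂ} (hW : W ∈ unitaryGroup ι ℂ) (M : Matrix ι ι ℂ)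
    (q : ℝ[X]) : aeval (W * M * Wᴴ) q = W * aeval M q * Wᴴ := by
  simpa [star_eq_conjTranspose] using aeval_algHom_apply
    ((Unitary.conjStarAlgAut ℂ _ ⟨W, hW⟩ : Matrix ι ι ℂ →⋆ₐ[ℂ] Matrix ι ι ℂ).toAlgHom
      |>.restrictScalars ℝ) M q

lemma unitary_conj_diagonal_eq_aeval {W : Matrix ι ι ℂ} (hW : W ∈ unitaryGroup ι ℂ)
    {e : ι → ℝ} {f : ℝ → ℝ} {q : ℝ[X]} (hq : ∀ i, q.eval (e i) = f (e i)) :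
    W * diagonal (fun i => (f (e i) : ℂ)) * Wᴴ
      = aeval (W * diagonal (fun i => (e i : ℂ)) * Wᴴ) q := by
  simp only [aeval_unitary_conj hW, aeval_diagonal_ofReal, hq]

lemma _root_.Matrix.IsHermitian.eq_eigenvectorUnitary_conj {A : Matrix ι ι ℂ} (hA : A.IsHermitian) :
    A = (hA.eigenvectorUnitary : Matrix ι ι ℂ) * diagonal (fun i => (hA.eigenvalues i : ℂ))
      * (hA.eigenvectorUnitary : Matrix ι ι ℂ)ᴴ :=
  hA.spectral_theorem

lemma _root_.Matrix.IsHermitian.matFun_eq {A : Matrix ι ι ℂ} (hA : A.IsHermitian) (f : ℝ → ℝ) :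
    matFun A f = (hA.eigenvectorUnitary : Matrix ι ι ℂ)
      * diagonal (fun i => (f (hA.eigenvalues i) : ℂ))
      * (hA.eigenvectorUnitary : Matrix ι ι ℂ)ᴴ := by
  rw [matFun, dif_pos hA, IsHermitian.cfc, Unitary.conjStarAlgAut_apply]
  rfl

/-- `matFun` is defined through Mathlib's choice of eigenbasis; that diagonalisation and the given
one both produce `aeval A q` for a polynomial `q` interpolating `f` on both lists of eigenvalues. -/
theorem matFun_unitary_conj_diagonal {W : Matrix ι ι ℂ} (hW : W ∈ unitaryGroup ι ℂ)
    (e : ι → ℝ) (f : ℝ → ℝ) :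
    matFun (W * diagonal (fun i => (e i : ℂ)) * Wᴴ) f
      = W * diagonal (fun i => (f (e i) : ℂ)) * Wᴴ := by
  set A := W * diagonal (fun i => (e i : ℂ)) * Wᴴ
  have hA : A.IsHermitian :=
    isHermitian_mul_mul_conjTranspose W (isHermitian_diagonal_of_self_adjoint _ (by ext; simp))
  set s : Finset ℝ := Finset.univ.image e ∪ Finset.univ.image hA.eigenvalues
  set q := Lagrange.interpolate s id f
  have hq : ∀ x ∈ s, q.eval x = f x := fun x hx =>
    Lagrange.eval_interpolate_at_node f (Set.injOn_id _) hx
  have hqe : ∀ i, q.eval (e i) = f (e i) := fun i => hq _ (by simp [s])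
  have hqa : ∀ i, q.eval (hA.eigenvalues i) = f (hA.eigenvalues i) := fun i => hq _ (by simp [s])
  rw [hA.matFun_eq, unitary_conj_diagonal_eq_aeval hW hqe,
    unitary_conj_diagonal_eq_aeval hA.eigenvectorUnitary.2 hqa, ← hA.eq_eigenvectorUnitary_conj]

theorem matFun_conjTranspose_mul_mul {A : Matrix ι ι ℂ} (hA : A.IsHermitian)
    {U : Matrix ι ι ℂ} (hU : U ∈ unitaryGroup ι ℂ) (f : ℝ → ℝ) :
    matFun (Uᴴ * A * U) f = Uᴴ * matFun A f * U := by
  set V := (hA.eigenvectorUnitary : Matrix ι ι ℂ)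
  have hUV : Uᴴ * V ∈ unitaryGroup ι ℂ :=
    Submonoid.mul_mem _ (Unitary.star_mem hU) hA.eigenvectorUnitary.2
  have hconj : ∀ D : Matrix ι ι ℂ, Uᴴ * (V * D * Vᴴ) * U = (Uᴴ * V) * D * (Uᴴ * V)ᴴ := by
    intro D
    simp only [conjTranspose_mul, conjTranspose_conjTranspose, Matrix.mul_assoc]
  rw [hA.eq_eigenvectorUnitary_conj, matFun_unitary_conj_diagonal hA.eigenvectorUnitary.2, hconj,
    hconj, matFun_unitary_conj_diagonal hUV]

lemma trace_mul_mul_of_mul_eq_one {U V : Matrix ι ι ℂ} (hVU : V * U = 1) (M : Matrix ι ι ℂ) :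
    (U * M * V).trace = M.trace := by
  rw [trace_mul_cycle, hVU, Matrix.one_mul]

lemma trace_mul_mul_diagonal_mul_conjTranspose (M W : Matrix ι ι ℂ) (d : ι → ℂ) :
    (M * (W * diagonal d * Wᴴ)).trace = ∑ i, (Wᴴ * M * W) i i * d i := by
  rw [← Matrix.mul_assoc, ← Matrix.mul_assoc, trace_mul_cycle, ← Matrix.mul_assoc]
  simp [trace, mul_diagonal]

theorem crossEnt_conjTranspose_mul_mul {A : Matrix ι ι ℂ} (hA : A.IsHermitian)
    {U : Matrix ι ι ℂ} (hU : U ∈ unitaryGroup ι ℂ) (σ : Matrix ι ι ℂ) :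
    crossEnt (Uᴴ * σ * U) (Uᴴ * A * U) = crossEnt σ A := by
  have hUU : U * Uᴴ = 1 := Unitary.mul_star_self_of_mem hU
  rw [crossEnt, matLog, matFun_conjTranspose_mul_mul hA hU,
    show Uᴴ * σ * U * (Uᴴ * matFun A Real.log * U) = Uᴴ * (σ * matFun A Real.log) * U by
      simp only [Matrix.mul_assoc, ← Matrix.mul_assoc U Uᴴ, hUU, Matrix.one_mul],
    trace_mul_mul_of_mul_eq_one hUU, crossEnt, matLog]

section Kronecker

variable {κ : Type*} [Fintype κ] [DecidableEq κ]

lemma _root_.Matrix.IsHermitian.kronecker_eq_unitary_conj_diagonal {A : Matrix ι ι ℂ}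
    {B : Matrix κ κ ℂ} (hA : A.IsHermitian) (hB : B.IsHermitian) :
    A ⊗ₖ B = ((hA.eigenvectorUnitary : Matrix ι ι ℂ) ⊗ₖ (hB.eigenvectorUnitary : Matrix κ κ ℂ))
      * diagonal (fun q => ((hA.eigenvalues q.1 * hB.eigenvalues q.2 : ℝ) : ℂ))
      * ((hA.eigenvectorUnitary : Matrix ι ι ℂ) ⊗ₖ (hB.eigenvectorUnitary : Matrix κ κ ℂ))ᴴ := by
  conv_lhs => rw [hA.eq_eigenvectorUnitary_conj, hB.eq_eigenvectorUnitary_conj]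
  rw [conjTranspose_kronecker, mul_kronecker_mul, mul_kronecker_mul,
    diagonal_kronecker_diagonal]
  push_cast
  rfl

lemma _root_.Matrix.IsHermitian.conj_eigenvectorUnitary_apply_self_eq_zero {A σ : Matrix ι ι ℂ}
    (hA : A.IsHermitian) (hσ : ∀ x, A *ᵥ x = 0 → σ *ᵥ x = 0) {j : ι}
    (hj : hA.eigenvalues j = 0) :
    ((hA.eigenvectorUnitary : Matrix ι ι ℂ)ᴴ * σ * hA.eigenvectorUnitary) j j = 0 := by
  have hker : A *ᵥ hA.eigenvectorBasis j = 0 := by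
    rw [hA.mulVec_eigenvectorBasis, hj, zero_smul]
  have := congrFun (congrArg ((hA.eigenvectorUnitary : Matrix ι ι ℂ)ᴴ *ᵥ ·) (hσ _ hker)) j
  rwa [← hA.eigenvectorUnitary_mulVec, mulVec_mulVec, mulVec_mulVec, mulVec_single_one,
    mulVec_zero] at this

lemma sum_mul_mul_log_mul {m n : Type*} [Fintype m] [Fintype n] {x : m → ℂ} {y : n → ℂ}
    {a : m → ℝ} {b : n → ℝ}
    (hx : ∀ j, a j = 0 → x j = 0) (hy : ∀ k, b k = 0 → y k = 0) :
    ∑ q : m × n, x q.1 * y q.2 * (Real.log (a q.1 * b q.2) : ℂ)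
      = (∑ k, y k) * ∑ j, x j * (Real.log (a j) : ℂ)
        + (∑ j, x j) * ∑ k, y k * (Real.log (b k) : ℂ) := by
  have hterm : ∀ j k, x j * y k * (Real.log (a j * b k) : ℂ)
      = y k * (x j * Real.log (a j)) + x j * (y k * Real.log (b k)) := by
    intro j k
    by_cases ha : a j = 0
    · simp [hx j ha]
    by_cases hb : b k = 0
    · simp [hy k hb]
    rw [Real.log_mul ha hb]
    push_cast
    ring
  simp only [Fintype.sum_prod_type, hterm, Finset.sum_add_distrib, Finset.sum_mul_sum]
  rw [Finset.sum_comm]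

theorem trace_kronecker_mul_matLog_kronecker {A σ : Matrix ι ι ℂ} {B τ : Matrix κ κ ℂ}
    (hA : A.IsHermitian) (hB : B.IsHermitian)
    (hσ : ∀ x, A *ᵥ x = 0 → σ *ᵥ x = 0) (hτ : ∀ y, B *ᵥ y = 0 → τ *ᵥ y = 0) :
    ((σ ⊗ₖ τ) * matLog (A ⊗ₖ B)).trace
      = τ.trace * (σ * matLog A).trace + σ.trace * (τ * matLog B).trace := by
  set VA := (hA.eigenvectorUnitary : Matrix ι ι ℂ)
  set VB := (hB.eigenvectorUnitary : Matrix κ κ ℂ)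
  have hV : VA ⊗ₖ VB ∈ unitaryGroup (ι × κ) ℂ :=
    kronecker_mem_unitary hA.eigenvectorUnitary.2 hB.eigenvectorUnitary.2
  have hconj : (VA ⊗ₖ VB)ᴴ * (σ ⊗ₖ τ) * (VA ⊗ₖ VB) = (VAᴴ * σ * VA) ⊗ₖ (VBᴴ * τ * VB) := by
    rw [conjTranspose_kronecker, mul_kronecker_mul, mul_kronecker_mul]
  rw [matLog, hA.kronecker_eq_unitary_conj_diagonal hB, matFun_unitary_conj_diagonal hV,
    trace_mul_mul_diagonal_mul_conjTranspose, hconj, matLog, matLog, hA.matFun_eq, hB.matFun_eq,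
    trace_mul_mul_diagonal_mul_conjTranspose, trace_mul_mul_diagonal_mul_conjTranspose]
  rw [← trace_mul_mul_of_mul_eq_one (Unitary.mul_star_self_of_mem hA.eigenvectorUnitary.2) σ,
    ← trace_mul_mul_of_mul_eq_one (Unitary.mul_star_self_of_mem hB.eigenvectorUnitary.2) τ]
  simp only [trace, diag_apply, kroneckerMap_apply]
  exact sum_mul_mul_log_mul (x := fun j => (VAᴴ * σ * VA) j j) (y := fun k => (VBᴴ * τ * VB) k k)
    (fun j => hA.conj_eigenvectorUnitary_apply_self_eq_zero hσ)
    (fun k => hB.conj_eigenvectorUnitary_apply_self_eq_zero hτ)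

theorem crossEnt_kronecker {A σ : Matrix ι ι ℂ} {B τ : Matrix κ κ ℂ}
    (hA : A.IsHermitian) (hB : B.IsHermitian)
    (hσ : ∀ x, A *ᵥ x = 0 → σ *ᵥ x = 0) (hτ : ∀ y, B *ᵥ y = 0 → τ *ᵥ y = 0)
    (hσ1 : σ.trace = 1) (hτ1 : τ.trace = 1) :
    crossEnt (σ ⊗ₖ τ) (A ⊗ₖ B) = crossEnt σ A + crossEnt τ B := by
  simp only [crossEnt, trace_kronecker_mul_matLog_kronecker hA hB hσ hτ, hσ1, hτ1, one_mul,
    Complex.add_re]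
  ring

end Kronecker

section PartialTrace

variable {dA dB : ℕ}

lemma ptraceB_eq_sum_submatrix (ρ : Matrix (Fin dA × Fin dB) (Fin dA × Fin dB) ℂ) :
    ptraceB ρ = ∑ k, ρ.submatrix (·, k) (·, k) := by
  ext
  simp [ptraceB, Matrix.sum_apply]

lemma _root_.Matrix.PosSemidef.ptraceB {ρ : Matrix (Fin dA × Fin dB) (Fin dA × Fin dB) ℂ}
    (hρ : ρ.PosSemidef) : (ptraceB ρ).PosSemidef := by
  rw [ptraceB_eq_sum_submatrix]
  exact posSemidef_sum _ fun k _ => hρ.submatrix _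

lemma trace_ptraceB (ρ : Matrix (Fin dA × Fin dB) (Fin dA × Fin dB) ℂ) :
    (ptraceB ρ).trace = ρ.trace := by
  simp [ptraceB, trace, Fintype.sum_prod_type]

lemma ptraceB_sum {α : Type*} (s : Finset α)
    (ρ : α → Matrix (Fin dA × Fin dB) (Fin dA × Fin dB) ℂ) :
    ptraceB (∑ k ∈ s, ρ k) = ∑ k ∈ s, ptraceB (ρ k) := by
  ext
  simp only [ptraceB, of_apply, Matrix.sum_apply]
  exact Finset.sum_comm

lemma ptraceB_smul (c : ℂ) (ρ : Matrix (Fin dA × Fin dB) (Fin dA × Fin dB) ℂ) :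
    ptraceB (c • ρ) = c • ptraceB ρ := by
  ext
  simp [ptraceB, Finset.mul_sum]

end PartialTrace

lemma mulVec_eq_zero_of_sum_smul_mulVec_eq_zero {n α : Type*} [Fintype n] {s : Finset α}
    {p : α → ℝ} (hp : ∀ k ∈ s, 0 < p k) {M : α → Matrix n n ℂ} (hM : ∀ k ∈ s, (M k).PosSemidef)
    {x : n → ℂ} (hx : (∑ k ∈ s, (p k : ℂ) • M k) *ᵥ x = 0) {i : α} (hi : i ∈ s) :
    M i *ᵥ x = 0 := by
  have hnonneg : ∀ k ∈ s, 0 ≤ star x ⬝ᵥ ((p k : ℂ) • M k) *ᵥ x := fun k hk =>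
    ((hM k hk).smul (Complex.zero_le_real.2 (hp k hk).le)).dotProduct_mulVec_nonneg x
  have hsum : ∑ k ∈ s, star x ⬝ᵥ ((p k : ℂ) • M k) *ᵥ x = 0 := by
    rw [← dotProduct_sum, ← sum_mulVec, hx, dotProduct_zero]
  have hi0 := (Finset.sum_eq_zero_iff_of_nonneg hnonneg).1 hsum i hi
  rw [smul_mulVec, dotProduct_smul, smul_eq_zero, (hM i hi).dotProduct_mulVec_zero_iff] at hi0
  exact hi0.resolve_left (by exact_mod_cast (hp i hi).ne')

theorem qae_cross_entropy_decomposition_general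
    {dA dB r : ℕ}
    (U : Matrix (Fin dA × Fin dB) (Fin dA × Fin dB) ℂ)
    (hU : U * U.conjTranspose = 1 ∧ U.conjTranspose * U = 1)
    (ρB : Matrix (Fin dB) (Fin dB) ℂ) (hρB : IsDensityMatrix ρB)
    (p : Fin r → ℝ) (hp : ∀ i, 0 < p i)
    (v : Fin r → (Fin dA × Fin dB) → ℂ) (hv : OrthonormalFam v)
    (ρin : Matrix (Fin dA × Fin dB) (Fin dA × Fin dB) ℂ)
    (hρin : ρin = ∑ i, (p i : ℂ) • outer (v i))
    (ρA : Matrix (Fin dA) (Fin dA) ℂ) (hρA : ρA = ptraceB (U * ρin * U.conjTranspose))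
    (ρAi : Fin r → Matrix (Fin dA) (Fin dA) ℂ)
    (hρAi : ∀ i, ρAi i = ptraceB (U * outer (v i) * U.conjTranspose))
    (ρout : Matrix (Fin dA × Fin dB) (Fin dA × Fin dB) ℂ)
    (hρout : ρout = U.conjTranspose * (ρA ⊗ₖ ρB) * U)
    (Φi : Fin r → Matrix (Fin dA × Fin dB) (Fin dA × Fin dB) ℂ)
    (hΦi : ∀ i, Φi i = U.conjTranspose * ((ρAi i) ⊗ₖ ρB) * U) :
    ∀ i, crossEnt (Φi i) ρout = vnEntropy ρB + crossEnt (ρAi i) ρA := by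
  have hρAi_psd : ∀ k, (ρAi k).PosSemidef := fun k => by
    rw [hρAi k]
    exact ((posSemidef_vecMulVec_self_star (v k)).mul_mul_conjTranspose_same U).ptraceB
  have hρA_eq : ρA = ∑ k, (p k : ℂ) • ρAi k := by
    simp only [hρA, hρin, hρAi, Finset.mul_sum, Finset.sum_mul, Matrix.mul_smul, Matrix.smul_mul,
      ptraceB_sum, ptraceB_smul]
  have hρA_psd : ρA.PosSemidef := by
    rw [hρA_eq]
    exact posSemidef_sum _ fun k _ => (hρAi_psd k).smul (Complex.zero_le_real.2 (hp k).le)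
  intro i
  have hsupp : ∀ x, ρA *ᵥ x = 0 → ρAi i *ᵥ x = 0 := fun x hx =>
    mulVec_eq_zero_of_sum_smul_mulVec_eq_zero (fun k _ => hp k) (fun k _ => hρAi_psd k)
      (hρA_eq ▸ hx) (Finset.mem_univ i)
  have htr : (ρAi i).trace = 1 := by
    rw [hρAi, trace_ptraceB, trace_mul_mul_of_mul_eq_one hU.2, outer, trace_vecMulVec,
      dotProduct_comm]
    simpa [dotProduct] using hv i i
  rw [hΦi, hρout, crossEnt_conjTranspose_mul_mul (hρA_psd.kronecker hρB.1).isHermitian ⟨hU.2, hU.1⟩,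
    crossEnt_kronecker hρA_psd.isHermitian hρB.1.isHermitian hsupp (fun _ => id) htr hρB.2,
    vnEntropy, add_comm]

/-- **Eq. (23)** (Cross entropy through the quantum-autoencoder channel). For each `i`,
`C(Φ(|pᵢ⟩⟨pᵢ|), ρout) = S(ρ_B) + C(ρ_A⁽ⁱ⁾, ρ_A)`. -/
theorem qae_cross_entropy_decomposition
    {dA dB r : ℕ}
    (U : Matrix (Fin dA × Fin dB) (Fin dA × Fin dB) ℂ)
    (hU : U * U.conjTranspose = 1 ∧ U.conjTranspose * U = 1)
    (ρB : Matrix (Fin dB) (Fin dB) ℂ) (hρB : IsDensityMatrix ρB)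
    (p : Fin r → ℝ) (hp : ∀ i, 0 < p i) (hp1 : ∑ i, p i = 1)
    (v : Fin r → (Fin dA × Fin dB) → ℂ) (hv : OrthonormalFam v)
    (ρin : Matrix (Fin dA × Fin dB) (Fin dA × Fin dB) ℂ)
    (hρin : ρin = ∑ i, (p i : ℂ) • outer (v i))
    (ρA : Matrix (Fin dA) (Fin dA) ℂ) (hρA : ρA = ptraceB (U * ρin * U.conjTranspose))
    (ρAi : Fin r → Matrix (Fin dA) (Fin dA) ℂ)
    (hρAi : ∀ i, ρAi i = ptraceB (U * outer (v i) * U.conjTranspose))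
    (ρout : Matrix (Fin dA × Fin dB) (Fin dA × Fin dB) ℂ)
    (hρout : ρout = U.conjTranspose * (ρA ⊗ₖ ρB) * U)
    (Φi : Fin r → Matrix (Fin dA × Fin dB) (Fin dA × Fin dB) ℂ)
    (hΦi : ∀ i, Φi i = U.conjTranspose * ((ρAi i) ⊗ₖ ρB) * U) :
    ∀ i, crossEnt (Φi i) ρout = vnEntropy ρB + crossEnt (ρAi i) ρA :=
  qae_cross_entropy_decomposition_general U hU ρB hρB p hp v hv ρin hρin ρA hρA ρAi hρAi ρout hρout
    Φi hΦi

end QCE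
end

section
/- (Appendix A: fidelity bound from projection onto a pure state) Let ρ be a density matrix on a d-dimensional complex Hilbert space with d ≥ 1 and let |ψ⟩ be a unit vector. Then the fidelity with the maximally mixed state satisfies √( F[ρ, 𝟙/d] ) ≤ √( ⟨ψ|ρ|ψ⟩ / d ) + √( (1 − ⟨ψ|ρ|ψ⟩)(1 − 1/d) ). Equivalently, writing 𝒞 = 1 − ⟨ψ|ρ|ψ⟩, F[ρ, 𝟙/d] ≤ ( √((1−𝒞)/d) + √(𝒞(1 − 1/d)) )². -/
open scoped Kronecker BigOperators ComplexOrder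

namespace QCE

variable {ι : Type*} [Fintype ι] [DecidableEq ι]

/-! With `λᵢ` the eigenvalues of `ρ` and `tᵢ = |⟨vᵢ|ψ⟩|²` the weights of `ψ` in an eigenbasis,
`F[ρ, 𝟙/d] = (Tr √ρ)² / d` and `Tr √ρ = ∑ √λᵢ`. Splitting
`√λᵢ = √(λᵢ tᵢ) √tᵢ + √(λᵢ (1 - tᵢ)) √(1 - tᵢ)` and applying Cauchy–Schwarz to both halves, with
`∑ λᵢ tᵢ = ⟨ψ|ρ|ψ⟩`, `∑ tᵢ = 1` and `∑ λᵢ = 1`, gives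
`Tr √ρ ≤ √⟨ψ|ρ|ψ⟩ + √((1 - ⟨ψ|ρ|ψ⟩)(d - 1))`. -/

open Matrix

theorem sum_sqrt_le_of_mem_Icc {κ : Type*} (s : Finset κ) {μ t : κ → ℝ}
    (hμ : ∀ i, 0 ≤ μ i) (ht : ∀ i, t i ∈ Set.Icc (0 : ℝ) 1) :
    ∑ i ∈ s, Real.sqrt (μ i) ≤
      Real.sqrt ((∑ i ∈ s, μ i * t i) * ∑ i ∈ s, t i) +
        Real.sqrt ((∑ i ∈ s, μ i * (1 - t i)) * ∑ i ∈ s, (1 - t i)) := by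
  have ht0 (i : κ) : 0 ≤ t i := (ht i).1
  have ht1 (i : κ) : 0 ≤ 1 - t i := sub_nonneg.2 (ht i).2
  have hsplit (i : κ) : Real.sqrt (μ i) =
      Real.sqrt (μ i * t i) * Real.sqrt (t i) +
        Real.sqrt (μ i * (1 - t i)) * Real.sqrt (1 - t i) := by
    rw [Real.sqrt_mul (hμ i), Real.sqrt_mul (hμ i), mul_assoc, mul_assoc,
      Real.mul_self_sqrt (ht0 i), Real.mul_self_sqrt (ht1 i), ← mul_add, add_sub_cancel,
      mul_one]
  rw [Finset.sum_congr rfl fun i _ => hsplit i, Finset.sum_add_distrib,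
    Real.sqrt_mul (Finset.sum_nonneg fun i _ => mul_nonneg (hμ i) (ht0 i)),
    Real.sqrt_mul (Finset.sum_nonneg fun i _ => mul_nonneg (hμ i) (ht1 i))]
  exact add_le_add
    (Real.sum_sqrt_mul_sqrt_le s (fun i => mul_nonneg (hμ i) (ht0 i)) ht0)
    (Real.sum_sqrt_mul_sqrt_le s (fun i => mul_nonneg (hμ i) (ht1 i)) ht1)

theorem star_dotProduct_self_eq_sum_norm_sq {κ : Type*} [Fintype κ] (v : κ → ℂ) :
    star v ⬝ᵥ v = ((∑ i, ‖v i‖ ^ 2 : ℝ) : ℂ) := by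
  simp only [dotProduct, Pi.star_apply, RCLike.star_def, Complex.conj_mul', Complex.ofReal_sum,
    Complex.ofReal_pow]

theorem unitary_star_mulVec_dotProduct {U : Matrix ι ι ℂ} (hU : U ∈ unitary (Matrix ι ι ℂ))
    (ψ : ι → ℂ) : star (star U *ᵥ ψ) ⬝ᵥ (star U *ᵥ ψ) = star ψ ⬝ᵥ ψ := by
  rw [star_mulVec, ← star_eq_conjTranspose, star_star, dotProduct_mulVec, vecMul_vecMul,
    Unitary.mul_star_self_of_mem hU, vecMul_one]

theorem _root_.Matrix.IsHermitian.trace_cfc {A : Matrix ι ι ℂ} (hA : A.IsHermitian)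
    (f : ℝ → ℝ) : (hA.cfc f).trace = ∑ i, (f (hA.eigenvalues i) : ℂ) := by
  rw [IsHermitian.cfc, Unitary.conjStarAlgAut_apply, trace_mul_cycle,
    Unitary.coe_star_mul_self, one_mul, trace_diagonal]
  rfl

theorem _root_.Matrix.IsHermitian.dotProduct_mulVec_eq_sum {A : Matrix ι ι ℂ}
    (hA : A.IsHermitian) (ψ : ι → ℂ) :
    star ψ ⬝ᵥ A *ᵥ ψ = ((∑ i, hA.eigenvalues i *
      ‖(star (hA.eigenvectorUnitary : Matrix ι ι ℂ) *ᵥ ψ) i‖ ^ 2 : ℝ) : ℂ) := by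
  set U : Matrix ι ι ℂ := ↑hA.eigenvectorUnitary
  have hstar : star (star U *ᵥ ψ) = star ψ ᵥ* U := by
    rw [star_mulVec, ← star_eq_conjTranspose, star_star]
  conv_lhs => rw [hA.spectral_theorem, Unitary.conjStarAlgAut_apply]
  rw [← mulVec_mulVec, ← mulVec_mulVec, dotProduct_mulVec, ← hstar]
  simp only [dotProduct, mulVec_diagonal, Complex.ofReal_sum, Complex.ofReal_mul,
    Complex.ofReal_pow]
  refine Finset.sum_congr rfl fun i _ => ?_
  rw [← Complex.conj_mul']
  simp only [Pi.star_apply, Function.comp_apply, RCLike.star_def]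
  exact mul_left_comm _ _ _

theorem matSqrt_eq_cfc {A : Matrix ι ι ℂ} (hA : A.IsHermitian) :
    matSqrt A = cfc Real.sqrt A := by
  rw [matSqrt, matFun, dif_pos hA, hA.cfc_eq]

theorem re_trace_matSqrt {A : Matrix ι ι ℂ} (hA : A.IsHermitian) :
    (matSqrt A).trace.re = ∑ i, Real.sqrt (hA.eigenvalues i) := by
  rw [matSqrt, matFun, dif_pos hA, hA.trace_cfc, ← Complex.ofReal_sum, Complex.ofReal_re]

theorem matSqrt_mul_self {A : Matrix ι ι ℂ} (hA : A.PosSemidef) :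
    matSqrt A * matSqrt A = A := by
  rw [matSqrt_eq_cfc hA.1, ← cfc_mul Real.sqrt Real.sqrt A]
  conv_rhs => rw [← cfc_id ℝ A hA.1.isSelfAdjoint]
  refine cfc_congr fun x hx => Real.mul_self_sqrt ?_
  rw [hA.1.spectrum_real_eq_range_eigenvalues] at hx
  obtain ⟨i, rfl⟩ := hx
  exact hA.eigenvalues_nonneg i

theorem matSqrt_smul {A : Matrix ι ι ℂ} (hA : A.IsHermitian) {c : ℝ} (hc : 0 ≤ c) :
    matSqrt ((c : ℂ) • A) = (Real.sqrt c : ℂ) • matSqrt A := by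
  rw [Complex.coe_smul, Complex.coe_smul, matSqrt_eq_cfc (hA.smul (IsSelfAdjoint.all c)),
    matSqrt_eq_cfc hA, ← cfc_comp_smul c Real.sqrt A, ← cfc_const_mul (√c) Real.sqrt A]
  exact cfc_congr fun x _ => Real.sqrt_mul hc x

theorem sqrt_fidelity_smul_one {ρ : Matrix ι ι ℂ} (hρ : ρ.PosSemidef) {c : ℝ} (hc : 0 ≤ c) :
    Real.sqrt (fidelity ρ ((c : ℂ) • 1)) = Real.sqrt c * (matSqrt ρ).trace.re := by
  have hinner : matSqrt ρ * ((c : ℂ) • 1) * matSqrt ρ = (c : ℂ) • ρ := by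
    rw [mul_smul_comm, mul_one, smul_mul_assoc, matSqrt_mul_self hρ]
  have htrace : 0 ≤ (matSqrt ρ).trace.re := by
    rw [re_trace_matSqrt hρ.1]
    exact Finset.sum_nonneg fun i _ => Real.sqrt_nonneg _
  rw [fidelity, hinner, matSqrt_smul hρ.1 hc, trace_smul, smul_eq_mul,
    Complex.re_ofReal_mul, Real.sqrt_sq (mul_nonneg (Real.sqrt_nonneg c) htrace)]

theorem IsDensityMatrix.nonempty {κ : Type*} [Fintype κ] {ρ : Matrix κ κ ℂ}
    (hρ : IsDensityMatrix ρ) : Nonempty κ := by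
  by_contra hempty
  rw [not_nonempty_iff] at hempty
  simpa [Matrix.trace] using hρ.2

theorem re_trace_matSqrt_le {ρ : Matrix ι ι ℂ} (hρ : IsDensityMatrix ρ) {ψ : ι → ℂ}
    (hψ : star ψ ⬝ᵥ ψ = 1) :
    (matSqrt ρ).trace.re ≤ Real.sqrt (star ψ ⬝ᵥ ρ *ᵥ ψ).re +
      Real.sqrt ((1 - (star ψ ⬝ᵥ ρ *ᵥ ψ).re) * (Fintype.card ι - 1)) := by
  obtain ⟨hpsd, htr⟩ := hρ
  set μ := hpsd.1.eigenvalues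
  set U := hpsd.1.eigenvectorUnitary
  set t : ι → ℝ := fun i => ‖(star (U : Matrix ι ι ℂ) *ᵥ ψ) i‖ ^ 2
  have hμ_sum : ∑ i, μ i = 1 := by
    have h := congrArg Complex.re hpsd.1.trace_eq_sum_eigenvalues
    rw [htr, Complex.re_sum] at h
    simpa using h.symm
  have ht_sum : ∑ i, t i = 1 := by
    have := unitary_star_mulVec_dotProduct U.2 ψ
    rw [hψ, star_dotProduct_self_eq_sum_norm_sq] at this
    exact_mod_cast this
  have ht (i : ι) : t i ∈ Set.Icc (0 : ℝ) 1 :=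
    ⟨by positivity, ht_sum ▸ Finset.single_le_sum (fun j _ => by positivity) (Finset.mem_univ i)⟩
  have hw : (star ψ ⬝ᵥ ρ *ᵥ ψ).re = ∑ i, μ i * t i := by
    rw [hpsd.1.dotProduct_mulVec_eq_sum, Complex.ofReal_re]
  have hμ_compl : ∑ i, μ i * (1 - t i) = 1 - ∑ i, μ i * t i := by
    simp only [mul_one_sub, Finset.sum_sub_distrib, hμ_sum]
  have ht_compl : ∑ i, (1 - t i) = Fintype.card ι - 1 := by
    simp [Finset.sum_sub_distrib, ht_sum]
  have := sum_sqrt_le_of_mem_Icc Finset.univ hpsd.eigenvalues_nonneg ht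
  rwa [ht_sum, mul_one, hμ_compl, ht_compl, ← hw, ← re_trace_matSqrt hpsd.1] at this

theorem fidelity_maximally_mixed_projection_bound_general
    {d : ℕ} (ρ : Matrix (Fin d) (Fin d) ℂ) (hρ : IsDensityMatrix ρ)
    (ψ : Fin d → ℂ) (hψ : ∑ a, star (ψ a) * ψ a = 1)
    (w : ℝ) (hw : w = (∑ a, ∑ b, star (ψ a) * ρ a b * ψ b).re)
    (𝒞 : ℝ) (h𝒞 : 𝒞 = 1 - w) :
    Real.sqrt (fidelity ρ (((d : ℂ))⁻¹ • 1))
        ≤ Real.sqrt (w / d) + Real.sqrt ((1 - w) * (1 - 1 / (d : ℝ))) ∧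
      fidelity ρ (((d : ℂ))⁻¹ • 1)
        ≤ (Real.sqrt ((1 - 𝒞) / d) + Real.sqrt (𝒞 * (1 - 1 / (d : ℝ)))) ^ 2 := by
  have hd : 0 < d := Fin.pos_iff_nonempty.2 hρ.nonempty
  have hw' : w = (star ψ ⬝ᵥ ρ *ᵥ ψ).re := by
    simp only [hw, dotProduct, mulVec, Finset.mul_sum, Pi.star_apply, mul_assoc]
  have hbound := re_trace_matSqrt_le hρ hψ
  rw [← hw', Fintype.card_fin] at hbound
  have hsqrt : Real.sqrt (fidelity ρ (((d : ℂ))⁻¹ • 1))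
      ≤ Real.sqrt (w / d) + Real.sqrt ((1 - w) * (1 - 1 / (d : ℝ))) := by
    have hc : ((d : ℂ))⁻¹ = (((d : ℝ)⁻¹ : ℝ) : ℂ) := by push_cast; rfl
    rw [hc, sqrt_fidelity_smul_one hρ.1 (by positivity)]
    calc Real.sqrt (d : ℝ)⁻¹ * (matSqrt ρ).trace.re
        ≤ Real.sqrt (d : ℝ)⁻¹ * (Real.sqrt w + Real.sqrt ((1 - w) * (d - 1))) :=
          mul_le_mul_of_nonneg_left hbound (Real.sqrt_nonneg _)
      _ = Real.sqrt (w / d) + Real.sqrt ((1 - w) * (1 - 1 / (d : ℝ))) := by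
          rw [mul_add, ← Real.sqrt_mul (by positivity), ← Real.sqrt_mul (by positivity)]
          congr 2 <;> field_simp
  refine ⟨hsqrt, ?_⟩
  have hF : 0 ≤ fidelity ρ (((d : ℂ))⁻¹ • 1) := sq_nonneg _
  rw [h𝒞, sub_sub_cancel, ← Real.sq_sqrt hF]
  exact pow_le_pow_left₀ (Real.sqrt_nonneg _) hsqrt 2

/-- **Appendix A** (Fidelity bound from projection onto a pure state).
For a density matrix `ρ` and a unit vector `|ψ⟩`,
`√F[ρ, 𝟙/d] ≤ √(⟨ψ|ρ|ψ⟩/d) + √((1 - ⟨ψ|ρ|ψ⟩)(1 - 1/d))`; equivalently, with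
`𝒞 = 1 - ⟨ψ|ρ|ψ⟩`, `F[ρ, 𝟙/d] ≤ (√((1-𝒞)/d) + √(𝒞(1 - 1/d)))²`. -/
theorem fidelity_maximally_mixed_projection_bound
    {d : ℕ} (hd : 1 ≤ d) (ρ : Matrix (Fin d) (Fin d) ℂ) (hρ : IsDensityMatrix ρ)
    (ψ : Fin d → ℂ) (hψ : ∑ a, star (ψ a) * ψ a = 1)
    (w : ℝ) (hw : w = (∑ a, ∑ b, star (ψ a) * ρ a b * ψ b).re)
    (𝒞 : ℝ) (h𝒞 : 𝒞 = 1 - w) :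
    Real.sqrt (fidelity ρ (((d : ℂ))⁻¹ • 1))
        ≤ Real.sqrt (w / d) + Real.sqrt ((1 - w) * (1 - 1 / (d : ℝ))) ∧
      fidelity ρ (((d : ℂ))⁻¹ • 1)
        ≤ (Real.sqrt ((1 - 𝒞) / d) + Real.sqrt (𝒞 * (1 - 1 / (d : ℝ)))) ^ 2 :=
  fidelity_maximally_mixed_projection_bound_general ρ hρ ψ hψ w hw 𝒞 h𝒞

end QCE
end
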